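/- arXiv:2105.05717 — 2 statements merged into one kernel-verified Lean document; each statement's English description precedes it below -/
import Mathlib

section
/- Let R be a commutative ring and M ≥ 1. Let u, v be share vectors and (α, β, γ) a Beaver triple, i.e. Σγ = (Σα)·(Σβ). Set e = Σ_{m}(u_m − α_m) and f = Σ_{m}(v_m − β_m), and define the output share vector z by z_1 = e·f + f·α_1 + e·β_1 + γ_1 and z_m = f·α_m + e·β_m + γ_m for m ≠ 1. Then Σ_{m} z_m = (Σ_m u_m)·(Σ_m v_m); that is, the secret-shared multiplication primitive MUL is lossless. -/
/-- Reconstruction of a share vector: the sum of its entries. -/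
def recon {R : Type*} [CommRing R] {M : ℕ} (u : Fin M → R) : R :=
  ∑ m, u m

/-- Beaver multiplication of share vectors `u` and `v` using the triple `(α, β, γ)`. -/
def beaverMul {R : Type*} [CommRing R] {M : ℕ} [NeZero M]
    (u v α β γ : Fin M → R) : Fin M → R := fun m =>
  let e : R := ∑ i, (u i - α i)
  let f : R := ∑ i, (v i - β i)
  if m = (0 : Fin M) then e * f + f * α m + e * β m + γ m
  else f * α m + e * β m + γ m

/-- the secret-shared multiplication primitive MUL is lossless. -/
theorem beaverMul_lossless {R : Type*} [CommRing R] {M : ℕ} [NeZero M]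
    (u v α β γ : Fin M → R)
    (hT : recon γ = recon α * recon β) :
    recon (beaverMul u v α β γ) = recon u * recon v := by
  set e : R := ∑ i, (u i - α i) with he
  set f : R := ∑ i, (v i - β i) with hf
  have key : ∀ m, beaverMul u v α β γ m
      = (if m = (0 : Fin M) then e * f else 0) + (f * α m + e * β m + γ m) := by
    intro m
    simp only [beaverMul, ← he, ← hf]
    split <;> ring
  have he' : e = recon u - recon α := by
    simp [he, recon, Finset.sum_sub_distrib]
  have hf' : f = recon v - recon β := by
    simp [hf, recon, Finset.sum_sub_distrib]
  calc recon (beaverMul u v α β γ)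
      = ∑ m, ((if m = (0 : Fin M) then e * f else 0) + (f * α m + e * β m + γ m)) := by
        simp [recon, key]
    _ = e * f + (f * recon α + e * recon β + recon γ) := by
        rw [Finset.sum_add_distrib, Finset.sum_ite_eq' Finset.univ (0 : Fin M)]
        simp [recon, Finset.sum_add_distrib, Finset.mul_sum]
    _ = recon u * recon v := by
        rw [he', hf', hT]; ring
end

section
/- Let a > 0, b ≠ 0, ε > 0 and r > 1 be real numbers with a·ε/|b| < 1. Define w : ℕ → ℝ by w(0) = 0 and w(t+1) = w(t) − (1/(r·a))·(a·w(t) + b), and let w* = −b/a. Then for every natural number t with t ≥ log(a·ε/|b|) / log((r−1)/r), one has |w(t) − w*| ≤ ε. -/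
/-- iteration-complexity bound for the perturbed gradient
descent: once `t ≥ log(aε/|b|)/log((r−1)/r)`, the iterate is `ε`-close to the
minimizer `w* = −b/a`. -/
theorem perturbed_gd_iteration_complexity (a b ε r : ℝ)
    (ha : 0 < a) (hb : b ≠ 0) (hε : 0 < ε) (hr : 1 < r)
    (hsmall : a * ε / |b| < 1)
    (w : ℕ → ℝ) (hw0 : w 0 = 0)
    (hrec : ∀ t : ℕ, w (t + 1) = w t - (1 / (r * a)) * (a * w t + b)) :
    ∀ t : ℕ, (t : ℝ) ≥ Real.log (a * ε / |b|) / Real.log ((r - 1) / r) →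
      |w t - (-b / a)| ≤ ε := by
  set q : ℝ := (r - 1) / r with hq
  have hr0 : (0:ℝ) < r := lt_trans one_pos hr
  have hq0 : 0 < q := div_pos (by linarith) hr0
  have hq1 : q < 1 := (div_lt_one hr0).mpr (by linarith)
  have hlogq : Real.log q < 0 := Real.log_neg hq0 hq1
  have hb' : 0 < |b| := abs_pos.mpr hb
  have hc : 0 < a * ε / |b| := div_pos (mul_pos ha hε) hb'
  -- closed form
  have key : ∀ t : ℕ, w t + b / a = q ^ t * (b / a) := by
    intro t
    induction t with
    | zero => simp [hw0]
    | succ n ih =>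
      have hstep : w (n + 1) + b / a = q * (w n + b / a) := by
        rw [hrec n, hq]
        have hane : a ≠ 0 := ne_of_gt ha
        have hrne : r ≠ 0 := ne_of_gt hr0
        field_simp
        ring
      rw [hstep, ih, pow_succ]
      ring
  intro t ht
  have hqt : q ^ t ≤ a * ε / |b| := by
    have h1 : (t : ℝ) * Real.log q ≤ Real.log (a * ε / |b|) := by
      rw [ge_iff_le, div_le_iff_of_neg hlogq] at ht
      linarith [ht]
    calc q ^ t = Real.exp ((t : ℝ) * Real.log q) := by
          rw [← Real.log_pow, Real.exp_log (pow_pos hq0 t)]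
      _ ≤ Real.exp (Real.log (a * ε / |b|)) := Real.exp_le_exp.mpr h1
      _ = a * ε / |b| := Real.exp_log hc
  have habs : |w t - (-b / a)| = q ^ t * (|b| / a) := by
    have : w t - (-b / a) = q ^ t * (b / a) := by
      have := key t; ring_nf; ring_nf at this; linarith
    rw [this, abs_mul, abs_of_pos (pow_pos hq0 t), abs_div, abs_of_pos ha]
  rw [habs]
  calc q ^ t * (|b| / a) ≤ (a * ε / |b|) * (|b| / a) :=
        mul_le_mul_of_nonneg_right hqt (le_of_lt (div_pos hb' ha))
    _ = ε := by field_simp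
end
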